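/- arXiv:2007.00766 — 4 statements merged into one kernel-verified Lean document; each statement's English description precedes it below -/
import Mathlib

section
/- For the radial eigenfunctions e_n(r) = √2 sin(nπr)/r on the unit ball of ℝ³ and any p > 3, one has ‖e_n‖_{L^p(Θ)} ≲ n^{1 − 3/p}, where the L^p norm is taken with respect to the measure r² dr on (0,1] (up to angular normalization), with implicit constant depending only on p. -/
/-!
Pointwise, `|e_n(r)| ≤ √2 · min(nπ, 1/r)`. Split `[0, 1]` at `1/(nπ)`: on the short piece the
bound `√2 nπ` gives `(nπ)^p · (nπ)^(-3)`, and on the rest the bound `√2/r` gives `∫ r^(2-p)`, which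
for `p > 3` is dominated by its lower endpoint and is again of order `(nπ)^(p-3)`. Taking
`p`-th roots yields `n^(1 - 3/p)`.
-/

open MeasureTheory Set

theorem abs_sin_mul_div_le (c r : ℝ) : |Real.sin (c * r) / r| ≤ |c| := by
  rcases eq_or_ne r 0 with rfl | hr
  · simp
  · rw [abs_div, div_le_iff₀ (abs_pos.mpr hr), ← abs_mul]
    exact Real.abs_sin_le_abs

theorem abs_sin_div_le_inv (x : ℝ) {r : ℝ} (hr : 0 < r) : |Real.sin x / r| ≤ 1 / r := by
  rw [abs_div, abs_of_pos hr]
  exact div_le_div_of_nonneg_right (Real.abs_sin_le_one x) hr.le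

section RadialWeight

variable {f : ℝ → ℝ} {p A : ℝ}

theorem integral_abs_rpow_mul_sq_le_of_abs_le {a : ℝ} (hp : 0 ≤ p) (ha : 0 ≤ a)
    (hf : IntervalIntegrable (fun r ↦ |f r| ^ p * r ^ 2) volume 0 a)
    (hbdd : ∀ r ∈ Icc 0 a, |f r| ≤ A) :
    ∫ r in 0..a, |f r| ^ p * r ^ 2 ≤ A ^ p * (a ^ 3 / 3) := calc
  ∫ r in 0..a, |f r| ^ p * r ^ 2 ≤ ∫ r in 0..a, A ^ p * r ^ 2 := by
    refine intervalIntegral.integral_mono_on ha hf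
      ((by fun_prop : Continuous fun r : ℝ ↦ A ^ p * r ^ 2).intervalIntegrable _ _) fun r hr ↦ ?_
    gcongr
    exact hbdd r hr
  _ = A ^ p * (a ^ 3 / 3) := by
    rw [intervalIntegral.integral_const_mul, integral_pow]
    norm_num

theorem integral_abs_rpow_mul_sq_le_of_abs_le_div {a : ℝ} (hp : 3 < p) (hA : 0 ≤ A)
    (ha : 0 < a) (ha1 : a ≤ 1)
    (hf : IntervalIntegrable (fun r ↦ |f r| ^ p * r ^ 2) volume a 1)
    (hdecay : ∀ r ∈ Icc a 1, |f r| ≤ A / r) :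
    ∫ r in a..1, |f r| ^ p * r ^ 2 ≤ A ^ p * a ^ (3 - p) / (p - 3) := by
  have h0 : (0 : ℝ) ∉ uIcc a 1 := notMem_uIcc_of_lt ha one_pos
  calc ∫ r in a..1, |f r| ^ p * r ^ 2 ≤ ∫ r in a..1, A ^ p * r ^ (2 - p) := by
        refine intervalIntegral.integral_mono_on ha1 hf
          ((intervalIntegral.intervalIntegrable_rpow (Or.inr h0)).const_mul _) fun r hr ↦ ?_
        have hr0 : 0 < r := ha.trans_le hr.1
        calc |f r| ^ p * r ^ 2 ≤ (A / r) ^ p * r ^ 2 := by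
              gcongr
              exact hdecay r hr
          _ = A ^ p * r ^ (2 - p) := by
              rw [Real.div_rpow hA hr0.le, Real.rpow_sub hr0, Real.rpow_two]
              ring
    _ = A ^ p * ((a ^ (3 - p) - 1) / (p - 3)) := by
        rw [intervalIntegral.integral_const_mul,
          integral_rpow (Or.inr ⟨by linarith, h0⟩), Real.one_rpow]
        congr 1
        rw [show 2 - p + 1 = -(p - 3) by ring, show 3 - p = -(p - 3) by ring, div_neg]
        ring
    _ ≤ A ^ p * a ^ (3 - p) / (p - 3) := by
        rw [mul_div_assoc]
        gcongr
        linarith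

theorem integral_abs_rpow_mul_sq_le {N : ℝ} (hp : 3 < p) (hA : 0 ≤ A) (hN : 1 ≤ N)
    (hbdd : ∀ r ∈ Icc 0 1, |f r| ≤ A * N) (hdecay : ∀ r ∈ Ioc 0 1, |f r| ≤ A / r) :
    ∫ r in 0..1, |f r| ^ p * r ^ 2 ≤ A ^ p * (1 / 3 + 1 / (p - 3)) * N ^ (p - 3) := by
  have hN0 : 0 < N := one_pos.trans_le hN
  have hK : 0 ≤ A ^ p * (1 / 3 + 1 / (p - 3)) * N ^ (p - 3) := by
    have : 0 < p - 3 := by linarith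
    positivity
  by_cases hf : IntervalIntegrable (fun r ↦ |f r| ^ p * r ^ 2) volume 0 1
  swap
  · rwa [intervalIntegral.integral_undef hf]
  set a := N⁻¹
  have ha : 0 < a := inv_pos.mpr hN0
  have ha1 : a ≤ 1 := inv_le_one_of_one_le₀ hN
  have hf₁ := hf.mono_set (uIcc_subset_uIcc left_mem_uIcc (mem_uIcc_of_le ha.le ha1))
  have hf₂ := hf.mono_set (uIcc_subset_uIcc (mem_uIcc_of_le ha.le ha1) right_mem_uIcc)
  rw [← intervalIntegral.integral_add_adjacent_intervals hf₁ hf₂]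
  have h₁ := integral_abs_rpow_mul_sq_le_of_abs_le (by linarith) ha.le hf₁
    fun r hr ↦ hbdd r ⟨hr.1, hr.2.trans ha1⟩
  have h₂ := integral_abs_rpow_mul_sq_le_of_abs_le_div hp hA ha ha1 hf₂
    fun r hr ↦ hdecay r ⟨ha.trans_le hr.1, hr.2⟩
  have hsmall : (A * N) ^ p * (a ^ 3 / 3) = A ^ p * N ^ (p - 3) / 3 := by
    rw [Real.mul_rpow hA hN0.le, Real.rpow_sub hN0, show N ^ (3 : ℝ) = N ^ 3 by norm_cast, inv_pow]
    field_simp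
  have hlarge : a ^ (3 - p) = N ^ (p - 3) := by
    rw [Real.inv_rpow hN0.le, ← Real.rpow_neg hN0.le, neg_sub]
  rw [hsmall] at h₁
  rw [hlarge] at h₂
  calc _ ≤ A ^ p * N ^ (p - 3) / 3 + A ^ p * N ^ (p - 3) / (p - 3) := add_le_add h₁ h₂
    _ = _ := by ring

theorem integral_abs_rpow_mul_sq_rpow_le {N : ℝ} (hp : 3 < p) (hA : 0 ≤ A) (hN : 1 ≤ N)
    (hbdd : ∀ r ∈ Icc 0 1, |f r| ≤ A * N) (hdecay : ∀ r ∈ Ioc 0 1, |f r| ≤ A / r) :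
    (∫ r in 0..1, |f r| ^ p * r ^ 2) ^ (1 / p) ≤
      A * (1 / 3 + 1 / (p - 3)) ^ (1 / p) * N ^ (1 - 3 / p) := by
  have hp0 : 0 < p := by linarith
  have hK : 0 ≤ 1 / 3 + 1 / (p - 3) := by
    have : 0 < p - 3 := by linarith
    positivity
  have hN0 : 0 ≤ N := zero_le_one.trans hN
  calc (∫ r in 0..1, |f r| ^ p * r ^ 2) ^ (1 / p)
      ≤ (A ^ p * (1 / 3 + 1 / (p - 3)) * N ^ (p - 3)) ^ (1 / p) := by
        refine Real.rpow_le_rpow ?_ (integral_abs_rpow_mul_sq_le hp hA hN hbdd hdecay)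
          (by positivity)
        exact intervalIntegral.integral_nonneg zero_le_one fun r _ ↦ by positivity
    _ = A * (1 / 3 + 1 / (p - 3)) ^ (1 / p) * N ^ (1 - 3 / p) := by
        rw [Real.mul_rpow (by positivity) (by positivity), Real.mul_rpow (by positivity) hK,
          ← Real.rpow_mul hA, ← Real.rpow_mul hN0, mul_one_div_cancel hp0.ne',
          Real.rpow_one]
        congr 2
        field_simp

end RadialWeight

/-- `‖e_n‖_{L^p(Θ)} ≲ n^{1 - 3/p}` for `p > 3`, where `e_n(r) = √2 sin(nπr)/r`
and the norm is taken with respect to the radial measure `r² dr` on `(0,1]`. -/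
theorem eigenfunction_Lp_bound_large_p (p : ℝ) (hp : 3 < p) (e : ℕ → ℝ → ℝ)
    (he : ∀ n r, e n r = Real.sqrt 2 * Real.sin (n * Real.pi * r) / r) :
    ∃ C > (0:ℝ), ∀ n : ℕ, 1 ≤ n →
      (∫ r in (0:ℝ)..1, |e n r| ^ p * r ^ 2) ^ (1 / p) ≤ C * (n : ℝ) ^ (1 - 3 / p) := by
  have hK : 0 < 1 / 3 + 1 / (p - 3) := by
    have : 0 < p - 3 := by linarith
    positivity
  refine ⟨√2 * (1 / 3 + 1 / (p - 3)) ^ (1 / p) * Real.pi ^ (1 - 3 / p), by positivity,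
    fun n hn ↦ ?_⟩
  have hN : 1 ≤ n * Real.pi := by
    nlinarith [Real.pi_gt_three, (Nat.one_le_cast (α := ℝ)).mpr hn]
  have habs : ∀ r, |e n r| = √2 * |Real.sin (n * Real.pi * r) / r| := by
    intro r
    rw [he, mul_div_assoc, abs_mul, abs_of_nonneg (Real.sqrt_nonneg 2)]
  calc (∫ r in (0:ℝ)..1, |e n r| ^ p * r ^ 2) ^ (1 / p)
      ≤ √2 * (1 / 3 + 1 / (p - 3)) ^ (1 / p) * (n * Real.pi) ^ (1 - 3 / p) := by
        refine integral_abs_rpow_mul_sq_rpow_le hp (Real.sqrt_nonneg 2) hN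
          (fun r _ ↦ ?_) (fun r hr ↦ ?_) <;> rw [habs]
        · gcongr
          exact (abs_sin_mul_div_le _ r).trans_eq (abs_of_nonneg (by positivity))
        · rw [div_eq_mul_one_div (√2)]
          gcongr
          exact abs_sin_div_le_inv _ hr.1
    _ = _ := by
        rw [Real.mul_rpow (Nat.cast_nonneg n) Real.pi_pos.le]
        ring
end

section
/- For the radial eigenfunctions e_n(r) = √2 sin(nπr)/r on the unit ball of ℝ³ and any 1 ≤ p < 3, the L^p norms are uniformly bounded: ‖e_n‖_{L^p(Θ)} ≲ 1 with implicit constant depending only on p and not on n. -/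
/-! Since `|sin| ≤ 1`, `|e_n(r)| ≤ √2 / r` uniformly in `n`, and `(√2 / r)^p` is integrable
against `r² dr` on `(0, 1]` exactly when `p < 3`, with integral `√2^p / (3 - p)`. -/

open MeasureTheory Set

lemma abs_mul_sin_div_le (c x r : ℝ) (hr : 0 ≤ r) : |c * Real.sin x / r| ≤ |c| / r := by
  rw [abs_div, abs_of_nonneg hr, abs_mul]
  gcongr
  exact mul_le_of_le_one_right (abs_nonneg c) (Real.abs_sin_le_one x)

lemma abs_rpow_mul_pow_le_of_abs_le_div {y A p r : ℝ} (k : ℕ) (hp : 0 ≤ p) (hr : 0 < r)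
    (hy : |y| ≤ A / r) : |y| ^ p * r ^ k ≤ A ^ p * r ^ ((k : ℝ) - p) := by
  have hA : 0 ≤ A := by
    simpa [hr.ne'] using mul_nonneg ((abs_nonneg y).trans hy) hr.le
  calc |y| ^ p * r ^ k ≤ (A / r) ^ p * r ^ k := by gcongr
    _ = A ^ p * r ^ ((k : ℝ) - p) := by
      rw [Real.div_rpow hA hr.le, Real.rpow_sub hr, Real.rpow_natCast]
      field_simp

theorem intervalIntegral_abs_rpow_mul_pow_le {f : ℝ → ℝ} {A p : ℝ} {k : ℕ} (hp : 0 ≤ p)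
    (hpk : p < k + 1) (hf : ∀ r ∈ Ioc (0 : ℝ) 1, |f r| ≤ A / r) :
    ∫ r in (0 : ℝ)..1, |f r| ^ p * r ^ k ≤ A ^ p / (k + 1 - p) := by
  have hexp : -1 < (k : ℝ) - p := by linarith
  have hbound : (∫ r in (0 : ℝ)..1, A ^ p * r ^ ((k : ℝ) - p)) = A ^ p / (k + 1 - p) := by
    rw [intervalIntegral.integral_const_mul, integral_rpow (Or.inl hexp), Real.one_rpow,
      Real.zero_rpow (by linarith)]
    ring_nf
  rw [← hbound, intervalIntegral.integral_of_le zero_le_one,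
    intervalIntegral.integral_of_le zero_le_one]
  have hIoc : ∀ᵐ r ∂volume.restrict (Ioc (0 : ℝ) 1), r ∈ Ioc (0 : ℝ) 1 :=
    ae_restrict_mem measurableSet_Ioc
  refine integral_mono_of_nonneg (hIoc.mono fun r hr => ?_)
    ((intervalIntegral.intervalIntegrable_rpow' hexp).const_mul _).1 (hIoc.mono fun r hr => ?_)
  · have := hr.1
    positivity
  · exact abs_rpow_mul_pow_le_of_abs_le_div k hp hr.1 (hf r hr)

/-- `‖e_n‖_{L^p(Θ)} ≲ 1` uniformly in `n` for `1 ≤ p < 3`, where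
`e_n(r) = √2 sin(nπr)/r` and the norm is taken against the radial measure `r² dr`. -/
theorem eigenfunction_Lp_bound_small_p (p : ℝ) (hp1 : 1 ≤ p) (hp3 : p < 3)
    (e : ℕ → ℝ → ℝ)
    (he : ∀ n r, e n r = Real.sqrt 2 * Real.sin (n * Real.pi * r) / r) :
    ∃ C > (0:ℝ), ∀ n : ℕ, 1 ≤ n →
      (∫ r in (0:ℝ)..1, |e n r| ^ p * r ^ 2) ^ (1 / p) ≤ C := by
  have hp0 : 0 < p := by linarith
  have hK : 0 < Real.sqrt 2 ^ p / (3 - p) := div_pos (by positivity) (by linarith)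
  refine ⟨_, Real.rpow_pos_of_pos hK (1 / p), fun n _ => ?_⟩
  have hen : ∀ r ∈ Ioc (0 : ℝ) 1, |e n r| ≤ Real.sqrt 2 / r := fun r hr => by
    simpa [he, abs_of_nonneg (Real.sqrt_nonneg 2)] using
      abs_mul_sin_div_le (Real.sqrt 2) (n * Real.pi * r) r hr.1.le
  have hbound : ∫ r in (0 : ℝ)..1, |e n r| ^ p * r ^ 2 ≤ Real.sqrt 2 ^ p / (3 - p) := by
    convert intervalIntegral_abs_rpow_mul_pow_le (k := 2) hp0.le (by norm_num; linarith) hen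
      using 2
    norm_num
  have hnonneg : 0 ≤ ∫ r in (0 : ℝ)..1, |e n r| ^ p * r ^ 2 :=
    intervalIntegral.integral_nonneg zero_le_one fun r _ => by positivity
  exact Real.rpow_le_rpow hnonneg hbound (by positivity)
end

section
/- Let m ≥ 2 and let n₁ ≥ n₂ ≥ … ≥ n_m be positive integers. Then ∫₀^∞ (1/s^{2m−2}) ∏_{j=2}^{m} sin²((n_j/n_m)·s) ds ≲ ∏_{j=2}^{m−1} (n_j/n_m)^{2 − 1/(m−1)}, with implicit constant depending only on m. -/
/-!
Write `aⱼ = nⱼ / n_m`, so that `a_m = 1`, and `p = 2 - 1/(m-1)`. Since `0 ≤ p ≤ 2`, the bound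
`sin² x ≤ min(1, x²)` gives `sin²(aⱼ s) ≤ (aⱼ s)^p` for the `m - 2` factors with `2 ≤ j ≤ m - 1`,
while the last factor is kept as `sin² s ≤ min(1, s²)`. The integrand is therefore at most
`∏ aⱼ^p · min(1, s²) · s^{p(m-2) - (2m-2)}`, and `p(m-2) - (2m-2) = 1/(m-1) - 3` lies in `(-3, -1)`,
which makes `min(1, s²) · s^{1/(m-1) - 3}` integrable on `(0, ∞)` with an integral depending only on `m`.
-/

open MeasureTheory Set

namespace Real

lemma sin_sq_le_rpow {p x : ℝ} (hp₀ : 0 ≤ p) (hp₂ : p ≤ 2) (hx : 0 ≤ x) : sin x ^ 2 ≤ x ^ p := by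
  rcases le_or_gt x 1 with hx₁ | hx₁
  · calc sin x ^ 2 ≤ x ^ 2 := sin_sq_le_sq
      _ = x ^ (2 : ℝ) := (rpow_two x).symm
      _ ≤ x ^ p := rpow_le_rpow_of_exponent_ge' hx hx₁ hp₀ hp₂
  · exact (sin_sq_le_one x).trans (one_le_rpow hx₁.le hp₀)

lemma prod_sin_sq_mul_le {ι : Type*} (t : Finset ι) {a : ι → ℝ} (ha : ∀ i ∈ t, 0 ≤ a i)
    {p s : ℝ} (hp₀ : 0 ≤ p) (hp₂ : p ≤ 2) (hs : 0 ≤ s) :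
    ∏ i ∈ t, sin (a i * s) ^ 2 ≤ (∏ i ∈ t, a i ^ p) * s ^ (p * t.card) :=
  calc ∏ i ∈ t, sin (a i * s) ^ 2
      ≤ ∏ i ∈ t, (a i * s) ^ p :=
        Finset.prod_le_prod (fun _ _ => sq_nonneg _)
          fun i hi => sin_sq_le_rpow hp₀ hp₂ (mul_nonneg (ha i hi) hs)
    _ = ∏ i ∈ t, a i ^ p * s ^ p := Finset.prod_congr rfl fun i hi => mul_rpow (ha i hi) hs
    _ = (∏ i ∈ t, a i ^ p) * s ^ (p * t.card) := by
        rw [Finset.prod_mul_distrib, Finset.prod_const, rpow_mul_natCast hs]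

end Real

open Real

lemma integrableOn_Ioi_min_one_sq_mul_rpow {e : ℝ} (he₁ : e < -1) (he₃ : -3 < e) :
    IntegrableOn (fun s : ℝ => min 1 (s ^ 2) * s ^ e) (Ioi 0) := by
  have h_Ioc : IntegrableOn (fun s : ℝ => min 1 (s ^ 2) * s ^ e) (Ioc 0 1) := by
    refine (intervalIntegral.intervalIntegrable_rpow' (a := 0) (b := 1) (r := e + 2)
      (by linarith)).1.congr_fun (fun s ⟨hs₀, hs₁⟩ => ?_) measurableSet_Ioc
    dsimp only
    rw [min_eq_right (pow_le_one₀ hs₀.le hs₁), rpow_add hs₀, ← rpow_two, mul_comm]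
  have h_Ioi : IntegrableOn (fun s : ℝ => min 1 (s ^ 2) * s ^ e) (Ioi 1) := by
    refine (integrableOn_Ioi_rpow_of_lt he₁ one_pos).congr_fun (fun s hs => ?_) measurableSet_Ioi
    dsimp only
    rw [min_eq_left (one_le_pow₀ (le_of_lt hs)), one_mul]
  simpa only [Ioc_union_Ioi_eq_Ioi zero_le_one] using h_Ioc.union h_Ioi

lemma one_div_pow_mul_prod_sin_sq_le {m : ℕ} (hm : 2 ≤ m) {a : ℕ → ℝ} (ha : ∀ j, 0 ≤ a j)
    (ham : a m = 1) {p : ℝ} (hp₀ : 0 ≤ p) (hp₂ : p ≤ 2) {s : ℝ} (hs : 0 < s) :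
    1 / s ^ (2 * m - 2) * ∏ j ∈ Finset.Icc 2 m, sin (a j * s) ^ 2 ≤
      (∏ j ∈ Finset.Icc 2 (m - 1), a j ^ p) *
        (min 1 (s ^ 2) * s ^ (p * ((m : ℝ) - 2) - (2 * m - 2))) := by
  have h_split : ∏ j ∈ Finset.Icc 2 m, sin (a j * s) ^ 2 =
      (∏ j ∈ Finset.Icc 2 (m - 1), sin (a j * s) ^ 2) * sin s ^ 2 := by
    obtain ⟨k, rfl⟩ : ∃ k, m = k + 1 := ⟨m - 1, by omega⟩
    rw [Finset.prod_Icc_succ_top (by omega), ham, one_mul, Nat.add_sub_cancel]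
  have h_card : ((Finset.Icc 2 (m - 1)).card : ℝ) = (m : ℝ) - 2 := by
    rw [Nat.card_Icc, Nat.sub_add_cancel (by omega), Nat.cast_sub hm, Nat.cast_ofNat]
  have h_pow : s ^ (2 * m - 2) = s ^ ((2 : ℝ) * m - 2) := by
    rw [← rpow_natCast, Nat.cast_sub (by omega), Nat.cast_mul, Nat.cast_ofNat]
  calc 1 / s ^ (2 * m - 2) * ∏ j ∈ Finset.Icc 2 m, sin (a j * s) ^ 2
      ≤ 1 / s ^ (2 * m - 2) * ((∏ j ∈ Finset.Icc 2 (m - 1), a j ^ p) *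
          s ^ (p * ((m : ℝ) - 2)) * min 1 (s ^ 2)) := by
        rw [h_split, ← h_card]
        have h_nonneg : 0 ≤ (∏ j ∈ Finset.Icc 2 (m - 1), a j ^ p) *
            s ^ (p * (Finset.Icc 2 (m - 1)).card) :=
          mul_nonneg (Finset.prod_nonneg fun j _ => rpow_nonneg (ha j) p) (rpow_nonneg hs.le _)
        gcongr 1 / _ * ?_
        exact mul_le_mul (prod_sin_sq_mul_le _ (fun j _ => ha j) hp₀ hp₂ hs.le)
          (le_min (sin_sq_le_one s) sin_sq_le_sq) (sq_nonneg _) h_nonneg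
    _ = _ := by
        rw [h_pow, rpow_sub hs (p * ((m : ℝ) - 2))]
        ring

/-- For `m ≥ 2` and positive integers `n₁ ≥ n₂ ≥ ⋯ ≥ n_m`,
`∫₀^∞ s^{-(2m-2)} ∏_{j=2}^m sin²((n_j/n_m) s) ds ≲ ∏_{j=2}^{m-1} (n_j/n_m)^{2 - 1/(m-1)}`,
with implicit constant depending only on `m`. -/
theorem sine_product_integral_bound (m : ℕ) (hm : 2 ≤ m) :
    ∃ C > (0:ℝ), ∀ n : ℕ → ℕ,
      (∀ j, 1 ≤ j → j ≤ m → 1 ≤ n j) →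
      (∀ i j, 1 ≤ i → i ≤ j → j ≤ m → n j ≤ n i) →
      (∫ s in Set.Ioi (0:ℝ),
          (1 / s ^ (2 * m - 2)) *
            ∏ j ∈ Finset.Icc 2 m, Real.sin ((n j : ℝ) / (n m) * s) ^ 2)
        ≤ C * ∏ j ∈ Finset.Icc 2 (m - 1),
            ((n j : ℝ) / (n m)) ^ (2 - 1 / ((m : ℝ) - 1)) := by
  set p : ℝ := 2 - 1 / ((m : ℝ) - 1)
  set e : ℝ := p * ((m : ℝ) - 2) - (2 * m - 2)
  have hm₁ : (1 : ℝ) ≤ (m : ℝ) - 1 := by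
    rw [le_sub_iff_add_le]
    exact_mod_cast hm
  have h_exp : e = 1 / ((m : ℝ) - 1) - 3 := by
    simp only [e, p]
    field_simp
    ring
  have h_inv_mem : 0 < 1 / ((m : ℝ) - 1) ∧ 1 / ((m : ℝ) - 1) ≤ 1 :=
    ⟨by positivity, (div_le_one (by linarith)).2 hm₁⟩
  have h_int := integrableOn_Ioi_min_one_sq_mul_rpow (e := e) (by linarith) (by linarith)
  set I := ∫ s in Ioi (0 : ℝ), min 1 (s ^ 2) * s ^ e
  have hI : 0 ≤ I := setIntegral_nonneg measurableSet_Ioi fun s (hs : 0 < s) => by positivity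
  refine ⟨I + 1, by positivity, fun n hn _ => ?_⟩
  have hnm : (n m : ℝ) ≠ 0 := by exact_mod_cast Nat.one_le_iff_ne_zero.mp (hn m (by omega) le_rfl)
  set K := ∏ j ∈ Finset.Icc 2 (m - 1), ((n j : ℝ) / n m) ^ p
  have hK : 0 ≤ K := Finset.prod_nonneg fun j _ => by positivity
  calc _ ≤ ∫ s in Ioi (0 : ℝ), K * (min 1 (s ^ 2) * s ^ e) :=
        setIntegral_mono_of_nonneg (fun s (hs : 0 < s) => by positivity)
          (fun s hs => one_div_pow_mul_prod_sin_sq_le hm (fun j => by positivity)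
            (div_self hnm) (by linarith) (by linarith) hs)
          (h_int.const_mul K)
    _ = K * I := integral_const_mul K _
    _ ≤ (I + 1) * K := by nlinarith
end

section
/- Let m ≥ 2 and n₁ ≥ n₂ ≥ … ≥ n_m be positive integers, and let e_n(r) = √2 sin(nπr)/r. Then the L² norm of the product of eigenfunctions satisfies ∫₀¹ ∏_{j=1}^{m} e_{n_j}(r)² · r² dr ≲ (n₂ n₃ ⋯ n_m)^{2 − 1/(m−1)}, with implicit constant depending only on m. -/
/-!
On `(0, r₀)` use `e_{n₁}(r)² r² ≤ 2` and `e_n(r)² ≤ 2π²n²` for the other factors, so the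
integrand is `O(N²)` with `N = n₂ ⋯ n_m`; on `(r₀, 1)` bound every factor by `e_n(r)² ≤ 2 / r²`,
so the integrand is `O(r^{2-2m})`. Splitting at the balancing radius
`r₀ = N^{-1/(m-1)}` makes both pieces `O(N^{2 - 1/(m-1)})`.
-/

open MeasureTheory Set Real intervalIntegral

noncomputable def radialEigenfunction (k : ℕ) (r : ℝ) : ℝ :=
  √2 * sin (k * π * r) / r

namespace radialEigenfunction

lemma sq_eq (k : ℕ) (r : ℝ) :
    radialEigenfunction k r ^ 2 = 2 * sin (k * π * r) ^ 2 / r ^ 2 := by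
  rw [radialEigenfunction, div_pow, mul_pow, sq_sqrt zero_le_two]

lemma sq_mul_sq_le_two (k : ℕ) (r : ℝ) : radialEigenfunction k r ^ 2 * r ^ 2 ≤ 2 := by
  rcases eq_or_ne r 0 with rfl | hr
  · simp
  rw [sq_eq, div_mul_cancel₀ _ (pow_ne_zero 2 hr)]
  nlinarith [sin_sq_le_one (k * π * r)]

lemma sq_le (k : ℕ) (r : ℝ) : radialEigenfunction k r ^ 2 ≤ 2 * π ^ 2 * k ^ 2 := by
  rw [sq_eq]
  rcases eq_or_ne r 0 with rfl | hr
  · rw [zero_pow two_ne_zero, div_zero]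
    positivity
  rw [div_le_iff₀ (by positivity)]
  nlinarith [sin_sq_le_sq (x := k * π * r)]

lemma sq_le_two_div_sq (k : ℕ) (r : ℝ) : radialEigenfunction k r ^ 2 ≤ 2 / r ^ 2 := by
  rw [sq_eq]
  gcongr
  exact mul_le_of_le_one_right zero_le_two (sin_sq_le_one _)

@[fun_prop]
lemma measurable (k : ℕ) : Measurable (radialEigenfunction k) := by
  unfold radialEigenfunction
  fun_prop

end radialEigenfunction

section Product

open Finset

variable {ι : Type*} (s : Finset ι) (n : ι → ℕ)

lemma prod_radialEigenfunction_sq_mul_sq_le [DecidableEq ι] {i : ι} (hi : i ∈ s) (r : ℝ) :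
    (∏ j ∈ s, radialEigenfunction (n j) r ^ 2) * r ^ 2
      ≤ 2 * (2 * π ^ 2) ^ (#s - 1) * (∏ j ∈ s.erase i, (n j : ℝ)) ^ 2 := by
  rw [← mul_prod_erase s _ hi, mul_right_comm, mul_assoc 2, ← card_erase_of_mem hi, ← prod_const,
    ← Finset.prod_pow, ← prod_mul_distrib]
  exact mul_le_mul (radialEigenfunction.sq_mul_sq_le_two _ _)
    (prod_le_prod (fun _ _ ↦ sq_nonneg _) fun j _ ↦ radialEigenfunction.sq_le _ _)
    (prod_nonneg fun _ _ ↦ sq_nonneg _) zero_le_two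

lemma prod_radialEigenfunction_sq_mul_sq_le_rpow {r : ℝ} (hr : 0 < r) :
    (∏ j ∈ s, radialEigenfunction (n j) r ^ 2) * r ^ 2
      ≤ 2 ^ #s * r ^ (-(2 * ((#s : ℝ) - 1))) := by
  have hprod : ∏ j ∈ s, radialEigenfunction (n j) r ^ 2 ≤ (2 / r ^ 2) ^ #s := by
    rw [← prod_const]
    exact prod_le_prod (fun _ _ ↦ sq_nonneg _) fun j _ ↦ radialEigenfunction.sq_le_two_div_sq _ _
  calc (∏ j ∈ s, radialEigenfunction (n j) r ^ 2) * r ^ 2 ≤ (2 / r ^ 2) ^ #s * r ^ 2 := by gcongr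
    _ = 2 ^ #s * r ^ (-(2 * ((#s : ℝ) - 1))) := by
      rw [show -(2 * ((#s : ℝ) - 1)) = 2 - 2 * #s by ring, rpow_sub hr, rpow_mul hr.le, rpow_two,
        rpow_natCast, div_pow]
      ring

lemma intervalIntegrable_prod_radialEigenfunction_sq_mul_sq {i : ι} (hi : i ∈ s) (a b : ℝ) :
    IntervalIntegrable (fun r ↦ (∏ j ∈ s, radialEigenfunction (n j) r ^ 2) * r ^ 2) volume a b := by
  classical
  refine (intervalIntegrable_const
    (c := 2 * (2 * π ^ 2) ^ (#s - 1) * (∏ j ∈ s.erase i, (n j : ℝ)) ^ 2)).mono_fun'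
    (by fun_prop : Measurable _).aestronglyMeasurable (Filter.Eventually.of_forall fun r ↦ ?_)
  dsimp only
  rw [norm_of_nonneg (by positivity)]
  exact prod_radialEigenfunction_sq_mul_sq_le s n hi r

end Product

lemma integral_le_of_le_of_le_mul_rpow_neg {F : ℝ → ℝ} (hF : IntervalIntegrable F volume 0 1)
    {a B p r₀ : ℝ} (hp : 1 < p) (hB : 0 ≤ B) (hr₀ : r₀ ∈ Ioc 0 1)
    (hFa : ∀ r ∈ Ioo 0 1, F r ≤ a) (hFB : ∀ r ∈ Ioo 0 1, F r ≤ B * r ^ (-p)) :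
    ∫ r in 0..1, F r ≤ a * r₀ + B / (p - 1) * r₀ ^ (1 - p) := by
  obtain ⟨h0, h1⟩ := hr₀
  have hr₀mem : r₀ ∈ uIcc 0 1 := by rw [uIcc_of_le zero_le_one]; exact ⟨h0.le, h1⟩
  have h0notin : (0 : ℝ) ∉ uIcc r₀ 1 := by rw [uIcc_of_le h1]; exact fun h ↦ h0.not_ge h.1
  have hF₀ := hF.mono_set (uIcc_subset_uIcc left_mem_uIcc hr₀mem)
  have hF₁ := hF.mono_set (uIcc_subset_uIcc hr₀mem right_mem_uIcc)
  rw [← integral_add_adjacent_intervals hF₀ hF₁]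
  gcongr ?_ + ?_
  · calc ∫ r in 0..r₀, F r ≤ ∫ _ in 0..r₀, a :=
          integral_mono_on_of_le_Ioo h0.le hF₀ intervalIntegrable_const
            fun r hr ↦ hFa r ⟨hr.1, hr.2.trans_le h1⟩
      _ = a * r₀ := by simp [mul_comm]
  · calc ∫ r in r₀..1, F r ≤ ∫ r in r₀..1, B * r ^ (-p) :=
          integral_mono_on_of_le_Ioo h1 hF₁
            ((intervalIntegrable_rpow (Or.inr h0notin)).const_mul B)
            fun r hr ↦ hFB r ⟨h0.trans hr.1, hr.2⟩
      _ = B / (p - 1) * (r₀ ^ (1 - p) - 1) := by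
        rw [intervalIntegral.integral_const_mul, integral_rpow (Or.inr ⟨by linarith, h0notin⟩),
          show -p + 1 = 1 - p by ring, one_rpow]
        have : p - 1 ≠ 0 := by linarith
        have : 1 - p ≠ 0 := by linarith
        field_simp
        ring
      _ ≤ B / (p - 1) * r₀ ^ (1 - p) :=
        mul_le_mul_of_nonneg_left (by linarith) (div_nonneg hB (by linarith))

lemma integral_le_mul_rpow_of_le_mul_sq_of_le_mul_rpow_neg {F : ℝ → ℝ}
    (hF : IntervalIntegrable F volume 0 1) {A B N q : ℝ} (hq : 1 / 2 < q) (hB : 0 ≤ B)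
    (hN : 1 ≤ N) (hFA : ∀ r ∈ Ioo 0 1, F r ≤ A * N ^ 2)
    (hFB : ∀ r ∈ Ioo 0 1, F r ≤ B * r ^ (-(2 * q))) :
    ∫ r in 0..1, F r ≤ (A + B / (2 * q - 1)) * N ^ (2 - 1 / q) := by
  have hN0 : 0 < N := one_pos.trans_le hN
  have hr₀ : N ^ (-(1 / q)) ∈ Ioc 0 1 :=
    ⟨rpow_pos_of_pos hN0 _, rpow_le_one_of_one_le_of_nonpos hN (neg_nonpos.2 (one_div_nonneg.2 (by linarith)))⟩
  have hsmall : N ^ 2 * N ^ (-(1 / q)) = N ^ (2 - 1 / q) := by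
    rw [← rpow_natCast, ← rpow_add hN0]
    ring_nf
  have hlarge : (N ^ (-(1 / q))) ^ (1 - 2 * q) = N ^ (2 - 1 / q) := by
    rw [← rpow_mul hN0.le]
    congr 1
    field_simp
    ring
  calc ∫ r in 0..1, F r
      ≤ A * N ^ 2 * N ^ (-(1 / q)) + B / (2 * q - 1) * (N ^ (-(1 / q))) ^ (1 - 2 * q) :=
        integral_le_of_le_of_le_mul_rpow_neg hF (by linarith) hB hr₀ hFA hFB
    _ = (A + B / (2 * q - 1)) * N ^ (2 - 1 / q) := by rw [mul_assoc, hsmall, hlarge]; ring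

/-- For `m ≥ 2` and positive integers `n₁ ≥ n₂ ≥ ⋯ ≥ n_m`, with
`e_n(r) = √2 sin(nπr)/r`, the L² norm of the product of eigenfunctions satisfies
`∫₀¹ ∏_{j=1}^m e_{n_j}(r)² r² dr ≲ (n₂ ⋯ n_m)^{2 - 1/(m-1)}`. -/
theorem eigenfunction_product_L2_bound (m : ℕ) (hm : 2 ≤ m) (e : ℕ → ℝ → ℝ)
    (he : ∀ k r, e k r = Real.sqrt 2 * Real.sin (k * Real.pi * r) / r) :
    ∃ C > (0:ℝ), ∀ n : ℕ → ℕ,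
      (∀ j, 1 ≤ j → j ≤ m → 1 ≤ n j) →
      (∀ i j, 1 ≤ i → i ≤ j → j ≤ m → n j ≤ n i) →
      (∫ r in (0:ℝ)..1, (∏ j ∈ Finset.Icc 1 m, e (n j) r ^ 2) * r ^ 2)
        ≤ C * (∏ j ∈ Finset.Icc 2 m, (n j : ℝ)) ^ (2 - 1 / ((m : ℝ) - 1)) := by
  obtain rfl : e = radialEigenfunction := funext₂ he
  have hm' : (2 : ℝ) ≤ m := by exact_mod_cast hm
  have h1 : 1 ∈ Finset.Icc 1 m := Finset.left_mem_Icc.2 (by omega)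
  have herase : (Finset.Icc 1 m).erase 1 = Finset.Icc 2 m := by
    rw [Finset.Icc_erase_left, ← Finset.Icc_add_one_left_eq_Ioc]; rfl
  have hcard : (Finset.Icc 1 m).card = m := by simp
  refine ⟨2 * (2 * π ^ 2) ^ (m - 1) + 2 ^ m / (2 * ((m : ℝ) - 1) - 1),
    add_pos_of_pos_of_nonneg (by positivity) (div_nonneg (by positivity) (by linarith)),
    fun n hn _ ↦ ?_⟩
  refine integral_le_mul_rpow_of_le_mul_sq_of_le_mul_rpow_neg
    (intervalIntegrable_prod_radialEigenfunction_sq_mul_sq _ n h1 0 1) (by linarith)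
    (by positivity) (Finset.one_le_prod fun j hj ↦ ?_) (fun r _ ↦ ?_) (fun r hr ↦ ?_)
  · obtain ⟨h2j, hjm⟩ := Finset.mem_Icc.1 hj
    exact_mod_cast hn j (by omega) hjm
  · simpa only [herase, hcard] using prod_radialEigenfunction_sq_mul_sq_le _ n h1 r
  · simpa only [hcard] using prod_radialEigenfunction_sq_mul_sq_le_rpow (Finset.Icc 1 m) n hr.1
end
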